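/- arXiv:1809.04035 — 3 statements merged into one kernel-verified Lean document; each statement's English description precedes it below -/
import Mathlib

section
/- If W ~ N(0,1), S > 0, ρ ∈ (-1,1), and F = sinh(√S·W) + ρ·(cosh(√S·W) − e^{S/2}), then with w = e^S the third central moment is E[F³] = ρ³ w^{3/2}(w−1)²(w+2) + 3ρ(1−ρ²) w^{1/2}((w⁴−1)/4 − (w²−1)/2). -/
/-!
With `a = √S`, `q = e^{S/2} = √w`, `F = A e^{aW} + B e^{-aW} + C` where `A = (1 + ρ)/2`,
`B = (ρ - 1)/2`, `C = -ρ q`. Expanding the cube turns `E[F³]` into a combination of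
`E[e^{taW}] = e^{t²a²/2} = q^{t²}` for `t ∈ {0, ±1, ±2, ±3}`, i.e. a polynomial in `q` and `ρ`.
-/

open MeasureTheory ProbabilityTheory Real

lemma integral_sum_mul_exp_pow_three {Ω ι : Type*} [MeasurableSpace Ω] [Fintype ι]
    {μ : Measure Ω} {X : Ω → ℝ} (hX : ∀ s, Integrable (fun ω ↦ exp (s * X ω)) μ)
    (c t : ι → ℝ) :
    ∫ ω, (∑ i, c i * exp (t i * X ω)) ^ 3 ∂μ
      = ∑ i, ∑ j, ∑ k, c i * c j * c k * mgf X μ (t i + t j + t k) := by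
  have hexpand : ∀ ω, (∑ i, c i * exp (t i * X ω)) ^ 3
      = ∑ i, ∑ j, ∑ k, c i * c j * c k * exp ((t i + t j + t k) * X ω) := fun ω ↦ by
    simp only [pow_three', Finset.sum_mul, Finset.mul_sum, add_mul, exp_add]
    exact Finset.sum_congr rfl fun i _ ↦ Finset.sum_congr rfl fun j _ ↦
      Finset.sum_congr rfl fun k _ ↦ by ring
  simp_rw [hexpand]
  rw [integral_finsetSum _ fun i _ ↦ integrable_finsetSum _ fun j _ ↦
    integrable_finsetSum _ fun k _ ↦ (hX _).const_mul _]
  refine Finset.sum_congr rfl fun i _ ↦ ?_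
  rw [integral_finsetSum _ fun j _ ↦ integrable_finsetSum _ fun k _ ↦ (hX _).const_mul _]
  refine Finset.sum_congr rfl fun j _ ↦ ?_
  rw [integral_finsetSum _ fun k _ ↦ (hX _).const_mul _]
  simp only [integral_const_mul, mgf]

lemma integral_exp_combination_pow_three_gaussianReal (A B C a : ℝ) :
    ∫ x, (A * exp (a * x) + B * exp (-a * x) + C) ^ 3 ∂gaussianReal 0 1
      = (A ^ 3 + B ^ 3) * exp (a ^ 2 / 2) ^ 9 + 3 * C * (A ^ 2 + B ^ 2) * exp (a ^ 2 / 2) ^ 4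
        + 3 * (A + B) * (A * B + C ^ 2) * exp (a ^ 2 / 2) + 6 * A * B * C + C ^ 3 := by
  have hsum : ∀ x, A * exp (a * x) + B * exp (-a * x) + C
      = ∑ i : Fin 3, ![A, B, C] i * exp (![1, -1, 0] i * a * x) := fun x ↦ by
    simp [Fin.sum_univ_three]
  simp_rw [hsum]
  rw [integral_sum_mul_exp_pow_three integrable_exp_mul_gaussianReal, mgf_fun_id_gaussianReal]
  simp only [← add_mul, mul_pow]
  simp only [Fin.sum_univ_three, Matrix.cons_val_zero, Matrix.cons_val_one, Matrix.cons_val_two,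
    Matrix.tail_cons, Matrix.head_cons, NNReal.coe_one, zero_mul, one_mul, zero_add, ← exp_nat_mul,
    Nat.cast_ofNat]
  ring_nf
  rw [exp_zero]
  ring

theorem stmt_4_general (S ρ : ℝ) (hS : 0 < S)
    (F : ℝ → ℝ)
    (hF : F = fun w => Real.sinh (Real.sqrt S * w)
      + ρ * (Real.cosh (Real.sqrt S * w) - Real.exp (S/2)))
    (w : ℝ) (hw : w = Real.exp S) :
    (∫ x, (F x)^3 ∂(gaussianReal 0 1)) =
      ρ^3 * w ^ ((3:ℝ)/2) * (w - 1)^2 * (w + 2)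
        + 3 * ρ * (1 - ρ^2) * w ^ ((1:ℝ)/2)
          * ((w^4 - 1) / 4 - (w^2 - 1) / 2) := by
  set q := exp (S / 2)
  have hF_exp :
      F = fun x ↦ (1 + ρ) / 2 * exp (√S * x) + (ρ - 1) / 2 * exp (-√S * x) + -(ρ * q) := by
    funext x
    simp only [hF, sinh_eq, cosh_eq, neg_mul]
    ring
  have hq : exp (√S ^ 2 / 2) = q := by rw [sq_sqrt hS.le]
  have hw_sq : w = q ^ 2 := by rw [hw, ← exp_nat_mul]; ring_nf
  have hw_rpow_three_halves : w ^ ((3 : ℝ) / 2) = q ^ 3 := by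
    rw [hw, ← exp_mul, ← exp_nat_mul]; ring_nf
  have hw_sqrt : w ^ ((1 : ℝ) / 2) = q := by rw [hw, ← exp_mul, mul_one_div]
  rw [hF_exp, integral_exp_combination_pow_three_gaussianReal, hq, hw_rpow_three_halves, hw_sqrt,
    hw_sq]
  ring

theorem stmt_4 (S ρ : ℝ) (hS : 0 < S) (h1 : -1 < ρ) (h2 : ρ < 1)
    (F : ℝ → ℝ)
    (hF : F = fun w => Real.sinh (Real.sqrt S * w)
      + ρ * (Real.cosh (Real.sqrt S * w) - Real.exp (S/2)))
    (w : ℝ) (hw : w = Real.exp S) :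
    (∫ x, (F x)^3 ∂(gaussianReal 0 1)) =
      ρ^3 * w ^ ((3:ℝ)/2) * (w - 1)^2 * (w + 2)
        + 3 * ρ * (1 - ρ^2) * w ^ ((1:ℝ)/2)
          * ((w^4 - 1) / 4 - (w^2 - 1) / 2) :=
  stmt_4_general S ρ hS F hF w hw
end

section
/- For fixed s ≠ 0, the function f(w) = 4s²(w³+3w²+6w+5)/(5(w+2)²) + (w−1)(1 + (w³+3w²+6w+5)/5) is strictly monotonically increasing on [1, ∞). -/
theorem stmt_6 (s : ℝ) (hs : s ≠ 0) :
    StrictMonoOn (fun w : ℝ =>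
      4 * s^2 * (w^3 + 3*w^2 + 6*w + 5) / (5 * (w + 2)^2)
        + (w - 1) * (1 + (w^3 + 3*w^2 + 6*w + 5) / 5))
      (Set.Ici 1) := by
  intro a ha b hb hab
  simp only [Set.mem_Ici] at ha hb
  have hs2 : 0 < s^2 := pow_pos (abs_pos.mpr hs) 2 |>.trans_le (by rw [sq_abs])
  have hda : (0:ℝ) < 5 * (a + 2)^2 := by nlinarith
  have hdb : (0:ℝ) < 5 * (b + 2)^2 := by nlinarith
  have h1 : 4 * s^2 * (a^3 + 3*a^2 + 6*a + 5) / (5 * (a + 2)^2)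
      < 4 * s^2 * (b^3 + 3*b^2 + 6*b + 5) / (5 * (b + 2)^2) := by
    rw [div_lt_div_iff₀ hda hdb]
    nlinarith [mul_pos hs2 (sub_pos.mpr hab), sq_nonneg (a*b), sq_nonneg (a+b),
      mul_pos (mul_pos hs2 (sub_pos.mpr hab)) (mul_pos (by nlinarith : (0:ℝ) < a) (by nlinarith : (0:ℝ) < b)),
      mul_pos (mul_pos hs2 (sub_pos.mpr hab)) (mul_pos (mul_pos (by nlinarith : (0:ℝ) < a) (by nlinarith : (0:ℝ) < b)) (mul_pos (by nlinarith : (0:ℝ) < a) (by nlinarith : (0:ℝ) < b)))]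
  have h2 : (a - 1) * (1 + (a^3 + 3*a^2 + 6*a + 5) / 5)
      < (b - 1) * (1 + (b^3 + 3*b^2 + 6*b + 5) / 5) := by
    have hq : (0:ℝ) < (b - a) * (b^2 + a*b + a^2 + 3*(a+b) + 6) :=
      mul_pos (sub_pos.mpr hab) (by nlinarith)
    nlinarith [mul_nonneg (by linarith : (0:ℝ) ≤ b - 1) hq.le,
      mul_pos (sub_pos.mpr hab) (by nlinarith : (0:ℝ) < a^3 + 3*a^2 + 6*a + 10)]
  exact add_lt_add h1 h2
end

section
/- Let F = sinh(√S·W) + ρ(cosh(√S·W) − e^{S/2}) with W ~ N(0,1), S > 0, ρ ∈ (−1,1), and let K ∈ ℝ with corresponding d = (1/√S)(asinh(−K/ρ* − (ρ/ρ*)e^{S/2}) + atanh ρ), ρ* = √(1−ρ²). Then E[(F − K)⁺] = (e^{S/2}/2)((1+ρ)N(d+√S) − (1−ρ)N(d−√S) − 2ρN(d)) − K·N(d). -/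
open MeasureTheory ProbabilityTheory

noncomputable def stdNormalCDF (x : ℝ) : ℝ := ((gaussianReal 0 1) (Set.Iic x)).toReal

noncomputable def artanh (x : ℝ) : ℝ := (1/2) * Real.log ((1 + x) / (1 - x))

/-!
Since `sinh x + ρ cosh x = √(1 - ρ²) sinh (x + artanh ρ)` and `sinh` is increasing, `F w ≥ K`
exactly when `w ≥ -d`, so `(F - K)⁺ = (F - K) · 1_{W ≥ -d}`. Expanding `sinh` and
`cosh`, `F - K` is a combination of `e^{√S w}`, `e^{-√S w}` and a constant, and each term is a
Gaussian tail under exponential tilting: `E[e^{aW}; W ≥ c] = e^{a²/2} N(a - c)`.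
-/

open Real hiding artanh
open Set
open scoped NNReal

lemma exp_mul_mul_gaussianPDFReal (μ : ℝ) (v : ℝ≥0) (t x : ℝ) :
    exp (t * x) * gaussianPDFReal μ v x
      = exp (μ * t + v * t ^ 2 / 2) * gaussianPDFReal (μ + v * t) v x := by
  rcases eq_or_ne v 0 with rfl | hv
  · simp [gaussianPDFReal_zero_var]
  simp only [gaussianPDFReal_def]
  rw [mul_left_comm, ← exp_add, mul_left_comm (exp _), ← exp_add]
  congr 2
  have : (v : ℝ) ≠ 0 := by exact_mod_cast hv
  field_simp
  ring

lemma setIntegral_exp_mul_gaussianReal {μ : ℝ} {v : ℝ≥0} (hv : v ≠ 0) (t : ℝ) {s : Set ℝ}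
    (hs : MeasurableSet s) :
    ∫ x in s, exp (t * x) ∂gaussianReal μ v
      = exp (μ * t + v * t ^ 2 / 2) * (gaussianReal (μ + v * t) v).real s := by
  rw [← integral_indicator hs, integral_gaussianReal_eq_integral_smul hv,
    measureReal_def, gaussianReal_apply_eq_integral _ hv,
    ENNReal.toReal_ofReal (setIntegral_nonneg hs fun _ _ => gaussianPDFReal_nonneg _ _ _),
    ← integral_const_mul, ← integral_indicator hs]
  congr 1 with x
  by_cases hx : x ∈ s
  · simp [hx, mul_comm (gaussianPDFReal μ v x), exp_mul_mul_gaussianPDFReal]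
  · simp [hx]

lemma gaussianReal_real_Ici (a c : ℝ) :
    (gaussianReal a 1).real (Ici c) = stdNormalCDF (a - c) := by
  have h := gaussianReal_map_const_sub (μ := 0) (v := 1) a
  rw [sub_zero] at h
  rw [stdNormalCDF, ← measureReal_def, ← h, map_measureReal_apply (by fun_prop) measurableSet_Ici]
  congr 1
  ext x
  simp only [mem_preimage, mem_Ici, mem_Iic]
  exact le_sub_comm

lemma setIntegral_Ici_exp_mul_stdGaussian (a c : ℝ) :
    ∫ w in Ici c, exp (a * w) ∂gaussianReal 0 1 = exp (a ^ 2 / 2) * stdNormalCDF (a - c) := by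
  rw [setIntegral_exp_mul_gaussianReal one_ne_zero a measurableSet_Ici, gaussianReal_real_Ici]
  simp

lemma artanh_eq_real_artanh {x : ℝ} (hx : x ∈ Icc (-1) 1) : artanh x = Real.artanh x :=
  (Real.artanh_eq_half_log hx).symm

lemma sinh_add_mul_cosh {ρ : ℝ} (hρ : ρ ∈ Ioo (-1) 1) (x : ℝ) :
    sinh x + ρ * cosh x = √(1 - ρ ^ 2) * sinh (x + Real.artanh ρ) := by
  have : 0 < √(1 - ρ ^ 2) := sqrt_pos.2 (by nlinarith [hρ.1, hρ.2])
  rw [sinh_add, sinh_artanh hρ, cosh_artanh hρ]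
  field_simp

lemma le_sinh_add_mul_cosh_sub_iff {ρ : ℝ} (hρ : ρ ∈ Ioo (-1) 1) (m K x : ℝ) :
    K ≤ sinh x + ρ * (cosh x - m)
      ↔ arsinh ((K + ρ * m) / √(1 - ρ ^ 2)) - Real.artanh ρ ≤ x := by
  have : 0 < √(1 - ρ ^ 2) := sqrt_pos.2 (by nlinarith [hρ.1, hρ.2])
  rw [mul_sub, ← add_sub_assoc, sinh_add_mul_cosh hρ, ← add_le_add_iff_right (ρ * m),
    sub_add_cancel, ← div_le_iff₀' this, ← arsinh_le_arsinh, arsinh_sinh, sub_le_iff_le_add]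

theorem stmt_16 (S ρ K : ℝ) (hS : 0 < S) (h1 : -1 < ρ) (h2 : ρ < 1)
    (ρs : ℝ) (hρs : ρs = Real.sqrt (1 - ρ^2))
    (F : ℝ → ℝ)
    (hF : F = fun w => Real.sinh (Real.sqrt S * w)
      + ρ * (Real.cosh (Real.sqrt S * w) - Real.exp (S/2)))
    (d : ℝ)
    (hd : d = (1 / Real.sqrt S) *
      (Real.arsinh (-K / ρs - (ρ / ρs) * Real.exp (S/2)) + artanh ρ)) :
    (∫ w, max (F w - K) 0 ∂(gaussianReal 0 1)) =
      (Real.exp (S/2) / 2) *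
        ((1 + ρ) * stdNormalCDF (d + Real.sqrt S)
          - (1 - ρ) * stdNormalCDF (d - Real.sqrt S)
          - 2 * ρ * stdNormalCDF d)
      - K * stdNormalCDF d := by
  have hρ : ρ ∈ Ioo (-1) 1 := ⟨h1, h2⟩
  have hsS : 0 < √S := sqrt_pos.2 hS
  have hexercise : ∀ w, K ≤ F w ↔ -d ≤ w := by
    intro w
    have hd' : -d = (arsinh ((K + ρ * exp (S / 2)) / ρs) - Real.artanh ρ) / √S := by
      rw [hd, artanh_eq_real_artanh (Ioo_subset_Icc_self hρ),
        show -K / ρs - ρ / ρs * exp (S / 2) = -((K + ρ * exp (S / 2)) / ρs) by ring, arsinh_neg]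
      ring
    rw [hF, le_sinh_add_mul_cosh_sub_iff hρ, ← hρs, hd', div_le_iff₀' hsS]
  have hpayoff : (fun w => max (F w - K) 0) = (Ici (-d)).indicator (fun w => F w - K) := by
    ext w
    by_cases hw : -d ≤ w
    · simp [hw, (hexercise w).2 hw]
    · simp [hw, (not_le.1 ((hexercise w).not.2 hw)).le]
  have hsplit : ∀ w, F w - K = (1 + ρ) / 2 * exp (√S * w) - (1 - ρ) / 2 * exp (-√S * w)
      - (ρ * exp (S / 2) + K) := by
    intro w
    simp only [hF, sinh_eq, cosh_eq, neg_mul]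
    ring
  have hint (t : ℝ) : IntegrableOn (fun w => exp (t * w)) (Ici (-d)) (gaussianReal 0 1) :=
    (integrable_exp_mul_gaussianReal t).integrableOn
  rw [hpayoff, integral_indicator measurableSet_Ici]
  simp_rw [hsplit]
  rw [integral_sub ?_ (integrable_const _),
    integral_sub ((hint _).const_mul _) ((hint _).const_mul _), integral_const_mul,
    integral_const_mul, setIntegral_const, setIntegral_Ici_exp_mul_stdGaussian,
    setIntegral_Ici_exp_mul_stdGaussian, gaussianReal_real_Ici, neg_sq, sq_sqrt hS.le]
  · simp only [smul_eq_mul, sub_neg_eq_add, zero_add]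
    rw [add_comm √S, neg_add_eq_sub]
    ring
  · exact ((hint _).const_mul _).sub ((hint _).const_mul _)
end
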